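/- Let N be a compact Riemannian manifold. The set of minimal lengths {‖γ‖ : γ ∈ VMO(S¹, N)} is a discrete subset of [0, ∞), where ‖γ‖ denotes the infimum of ∫_{S¹}|γ̃'| over C¹ maps γ̃ : S¹ → N homotopic to γ in VMO(S¹, N). -/

import Mathlib

open Real Metric

/-- A closed loop in `N`, parametrised as a continuous `2π`-periodic map. -/
def IsLoopIn {ν : ℕ} (N : Set (EuclideanSpace ℝ (Fin ν)))
    (γ : ℝ → EuclideanSpace ℝ (Fin ν)) : Prop :=
  Continuous γ ∧ Function.Periodic γ (2 * π) ∧ ∀ t, γ t ∈ N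

/-- Two loops are homotopic within `N`. -/
def LoopHomotopicIn {ν : ℕ} (N : Set (EuclideanSpace ℝ (Fin ν)))
    (f g : ℝ → EuclideanSpace ℝ (Fin ν)) : Prop :=
  ∃ H : ℝ × ℝ → EuclideanSpace ℝ (Fin ν), Continuous H ∧
    (∀ t, H (0, t) = f t) ∧ (∀ t, H (1, t) = g t) ∧
    (∀ p, H p ∈ N) ∧ (∀ s t, H (s, t + 2 * π) = H (s, t))

/-- The length of a loop. -/
noncomputable def loopLength {ν : ℕ} (γ : ℝ → EuclideanSpace ℝ (Fin ν)) : ℝ :=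
  ∫ t in (0 : ℝ)..(2 * π), ‖deriv γ t‖

/-- The minimal length `‖γ‖` in the homotopy class of `γ` in `N`: the infimum
of the lengths of `C¹` loops in `N` homotopic to `γ` within `N`. -/
noncomputable def minLength {ν : ℕ} (N : Set (EuclideanSpace ℝ (Fin ν)))
    (γ : ℝ → EuclideanSpace ℝ (Fin ν)) : ℝ :=
  sInf {L | ∃ β, ContDiff ℝ 1 β ∧ IsLoopIn N β ∧ LoopHomotopicIn N γ β ∧
    L = loopLength β}

namespace MinLenAux

variable {ν : ℕ} {N : Set (EuclideanSpace ℝ (Fin ν))}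

theorem hom_symm {f g : ℝ → EuclideanSpace ℝ (Fin ν)}
    (h : LoopHomotopicIn N f g) : LoopHomotopicIn N g f := by
  obtain ⟨H, hc, h0, h1, hN, hper⟩ := h
  refine ⟨fun p => H (1 - p.1, p.2), ?_, ?_, ?_, fun p => hN _, fun s t => hper _ t⟩
  · exact hc.comp (by fun_prop)
  · intro t; simpa using h1 t
  · intro t; simpa using h0 t

theorem hom_trans {f g k : ℝ → EuclideanSpace ℝ (Fin ν)}
    (h1 : LoopHomotopicIn N f g) (h2 : LoopHomotopicIn N g k) : LoopHomotopicIn N f k := by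
  obtain ⟨H1, c1, a1, b1, n1, p1⟩ := h1
  obtain ⟨H2, c2, a2, b2, n2, p2⟩ := h2
  refine ⟨fun p => if p.1 ≤ 1/2 then H1 (2*p.1, p.2) else H2 (2*p.1 - 1, p.2),
    ?_, ?_, ?_, ?_, ?_⟩
  · apply Continuous.if_le
    · exact c1.comp (by fun_prop)
    · exact c2.comp (by fun_prop)
    · exact continuous_fst
    · exact continuous_const
    · rintro ⟨s, t⟩ h
      simp only at h
      subst h
      have e1 : (2 : ℝ) * (1/2 : ℝ) = 1 := by norm_num
      have e2 : (2 : ℝ) * (1/2 : ℝ) - 1 = 0 := by norm_num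
      simp only [e1, e2, b1, a2]
      norm_num [a2]
  · intro t; norm_num [a1]
  · intro t; norm_num [b2]
  · intro p; dsimp only; split
    · exact n1 _
    · exact n2 _
  · intro s t; dsimp only; split
    · exact p1 _ t
    · exact p2 _ t

theorem minLength_congr {γ₁ γ₂ : ℝ → EuclideanSpace ℝ (Fin ν)}
    (h : LoopHomotopicIn N γ₁ γ₂) : minLength N γ₁ = minLength N γ₂ := by
  unfold minLength
  congr 1
  ext L
  constructor <;> rintro ⟨β, hb, hl, hh, rfl⟩
  · exact ⟨β, hb, hl, hom_trans (hom_symm h) hh, rfl⟩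
  · exact ⟨β, hb, hl, hom_trans h hh, rfl⟩

theorem loopLength_nonneg (γ : ℝ → EuclideanSpace ℝ (Fin ν)) : 0 ≤ loopLength γ :=
  intervalIntegral.integral_nonneg (by positivity) fun u _ => norm_nonneg _

theorem minLength_nonneg (γ : ℝ → EuclideanSpace ℝ (Fin ν)) : 0 ≤ minLength N γ :=
  Real.sInf_nonneg (by rintro x ⟨β, _, _, _, rfl⟩; exact loopLength_nonneg β)

/-- Uniformly close loops in `N` are homotopic in `N`, via the retraction. -/
theorem hom_of_close {U : Set (EuclideanSpace ℝ (Fin ν))}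
    {r : EuclideanSpace ℝ (Fin ν) → EuclideanSpace ℝ (Fin ν)}
    (hr : ContDiffOn ℝ (⊤ : ℕ∞) r U) (hrN : ∀ x ∈ U, r x ∈ N) (hrid : ∀ x ∈ N, r x = x)
    {δ : ℝ} (hth : Metric.thickening δ N ⊆ U)
    {f g : ℝ → EuclideanSpace ℝ (Fin ν)}
    (hf : Continuous f) (hg : Continuous g) (hfN : ∀ t, f t ∈ N) (hgN : ∀ t, g t ∈ N)
    (hfp : Function.Periodic f (2 * π)) (hgp : Function.Periodic g (2 * π))
    (hclose : ∀ t, ‖f t - g t‖ < δ) : LoopHomotopicIn N f g := by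
  set proj : ℝ → ℝ := fun s => max 0 (min s 1) with hprojdef
  have hprojc : Continuous proj := by fun_prop
  have hproj0 : proj 0 = 0 := by norm_num [hprojdef]
  have hproj1 : proj 1 = 1 := by norm_num [hprojdef]
  have hproj01 : ∀ s, 0 ≤ proj s ∧ proj s ≤ 1 := fun s =>
    ⟨le_max_left _ _, max_le (by linarith [min_le_right s 1]) (min_le_right s 1)⟩
  have hmem : ∀ s t, f t + proj s • (g t - f t) ∈ U := by
    intro s t
    apply hth
    rw [Metric.mem_thickening_iff]
    refine ⟨f t, hfN t, ?_⟩
    rw [dist_eq_norm]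
    have h1 : f t + proj s • (g t - f t) - f t = proj s • (g t - f t) := by abel
    rw [h1, norm_smul, Real.norm_eq_abs, abs_of_nonneg (hproj01 s).1]
    calc proj s * ‖g t - f t‖ ≤ 1 * ‖g t - f t‖ :=
          mul_le_mul_of_nonneg_right (hproj01 s).2 (norm_nonneg _)
      _ = ‖f t - g t‖ := by rw [one_mul, norm_sub_rev]
      _ < δ := hclose t
  refine ⟨fun p => r (f p.2 + proj p.1 • (g p.2 - f p.2)), ?_, ?_, ?_, ?_, ?_⟩
  · exact hr.continuousOn.comp_continuous (by fun_prop) fun p => hmem p.1 p.2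
  · intro t; simp only [hproj0, zero_smul, add_zero]; exact hrid _ (hfN t)
  · intro t
    simp only [hproj1, one_smul, add_sub_cancel]
    exact hrid _ (hgN t)
  · exact fun p => hrN _ (hmem p.1 p.2)
  · intro s t; simp only [hfp t, hgp t]

/-- Any `C¹` loop in `N` is homotopic in `N` to a Lipschitz loop with controlled
Lipschitz constant. -/
theorem exists_lipschitz_rep (β : ℝ → EuclideanSpace ℝ (Fin ν))
    (hβ : ContDiff ℝ 1 β) (hl : IsLoopIn N β) :
    ∃ f : ℝ → EuclideanSpace ℝ (Fin ν), Continuous f ∧ Function.Periodic f (2 * π) ∧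
      (∀ t, f t ∈ N) ∧
      (∀ s t : ℝ, ‖f s - f t‖ ≤ (loopLength β + 2 * π) / (2 * π) * |s - t|) ∧
      LoopHomotopicIn N β f := by
  obtain ⟨hβc, hβp, hβN⟩ := hl
  have hd : Continuous (deriv β) := hβ.continuous_deriv le_rfl
  set g : ℝ → ℝ := fun t => ‖deriv β t‖ + 1 with hgdef
  have hg : Continuous g := by fun_prop
  have hg1 : ∀ t, 1 ≤ g t := fun t => by
    simp only [hgdef]; linarith [norm_nonneg (deriv β t)]
  have hgint : ∀ a b : ℝ, IntervalIntegrable g MeasureTheory.volume a b := fun a b =>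
    hg.intervalIntegrable a b
  have hderper : ∀ t, deriv β (t + 2 * π) = deriv β t := by
    intro t
    calc deriv β (t + 2 * π) = deriv (fun x => β (x + 2 * π)) t :=
          (deriv_comp_add_const β (2 * π) t).symm
      _ = deriv β t := by rw [show (fun x => β (x + 2 * π)) = β from funext fun x => hβp x]
  have hgper : Function.Periodic g (2 * π) := fun t => by simp only [hgdef, hderper t]
  set ℓ : ℝ := loopLength β with hldef
  have hℓ0 : 0 ≤ ℓ := loopLength_nonneg β
  have h2π : (0:ℝ) < 2 * π := by positivity
  have hl2 : (0:ℝ) < ℓ + 2 * π := by linarith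
  set c : ℝ := 2 * π / (ℓ + 2 * π) with hcdef
  have hc : 0 < c := by positivity
  set σ : ℝ → ℝ := fun t => c * ∫ u in (0:ℝ)..t, g u with hσdef
  have hσc : Continuous σ :=
    continuous_const.mul (intervalIntegral.continuous_primitive hgint 0)
  have hσadd : ∀ a b : ℝ, σ b - σ a = c * ∫ u in a..b, g u := by
    intro a b
    have := intervalIntegral.integral_add_adjacent_intervals (hgint 0 a) (hgint a b)
    simp only [hσdef]
    rw [← this]; ring
  have hint_lb : ∀ a b : ℝ, a ≤ b → b - a ≤ ∫ u in a..b, g u := by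
    intro a b hab
    have h1 : ∫ u in a..b, (1:ℝ) ≤ ∫ u in a..b, g u :=
      intervalIntegral.integral_mono_on hab (intervalIntegrable_const) (hgint a b)
        fun x _ => hg1 x
    simpa using h1
  have hσlb : ∀ a b : ℝ, a ≤ b → c * (b - a) ≤ σ b - σ a := by
    intro a b hab
    rw [hσadd a b]
    exact mul_le_mul_of_nonneg_left (hint_lb a b hab) hc.le
  have hmono : StrictMono σ := by
    intro a b hab
    have := hσlb a b hab.le
    nlinarith
  have hσ0 : σ 0 = 0 := by simp [hσdef]
  have htop : Filter.Tendsto σ Filter.atTop Filter.atTop := by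
    apply Filter.tendsto_atTop_mono' Filter.atTop
      (Filter.eventually_atTop.2 ⟨0, fun t ht => ?_⟩)
      ((Filter.tendsto_id (α := ℝ)).const_mul_atTop hc)
    have := hσlb 0 t ht
    simp only [hσ0] at this
    simpa using this
  have hbot : Filter.Tendsto σ Filter.atBot Filter.atBot := by
    have hlin : Filter.Tendsto (fun t : ℝ => c * t) Filter.atBot Filter.atBot :=
      (Filter.tendsto_id (α := ℝ)).const_mul_atBot hc
    have hev : ∀ᶠ t in Filter.atBot, σ t ≤ c * t := by
      refine Filter.eventually_atBot.2 ⟨0, fun t ht => ?_⟩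
      have h := hσlb t 0 ht
      simp only [hσ0] at h
      nlinarith
    exact Filter.tendsto_atBot_mono' Filter.atBot hev hlin
  have hsurj : Function.Surjective σ := hσc.surjective htop hbot
  set e := StrictMono.orderIsoOfSurjective σ hmono hsurj with hedef
  set τ : ℝ → ℝ := fun s => e.symm s with hτdef
  have hτc : Continuous τ := e.symm.continuous
  have hστ : ∀ s, σ (τ s) = s := fun s =>
    StrictMono.orderIsoOfSurjective_self_symm_apply σ hmono hsurj s
  have hτmono : Monotone τ := fun a b hab => e.symm.monotone hab
  have hσ2π : ∀ t, σ (t + 2 * π) = σ t + 2 * π := by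
    intro t
    have hper : (∫ u in t..t + 2 * π, g u) = ∫ u in (0:ℝ)..(0:ℝ) + 2 * π, g u :=
      hgper.intervalIntegral_add_eq t 0
    have hsum : (∫ u in (0:ℝ)..2 * π, g u) = ℓ + 2 * π := by
      have : (∫ u in (0:ℝ)..2 * π, g u)
          = (∫ u in (0:ℝ)..2 * π, ‖deriv β u‖) + ∫ u in (0:ℝ)..2 * π, (1:ℝ) := by
        rw [← intervalIntegral.integral_add (hd.norm.intervalIntegrable 0 (2*π))
          intervalIntegrable_const]
      rw [this, hldef]
      simp [loopLength]
    have h1 : σ (t + 2 * π) - σ t = c * (ℓ + 2 * π) := by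
      rw [hσadd t (t + 2*π), hper]
      rw [zero_add, hsum]
    have h2 : c * (ℓ + 2 * π) = 2 * π := by
      rw [hcdef]; field_simp
    linarith [h1, h2]
  have hτ2π : ∀ s, τ (s + 2 * π) = τ s + 2 * π := by
    intro s
    apply hmono.injective
    rw [hστ, hσ2π, hστ]
  -- the fundamental theorem of calculus estimate
  have hftc : ∀ a b : ℝ, a ≤ b → ‖β b - β a‖ ≤ ∫ u in a..b, ‖deriv β u‖ := by
    intro a b hab
    have heq : ∫ u in a..b, deriv β u = β b - β a :=
      intervalIntegral.integral_deriv_eq_sub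
        (fun x _ => (hβ.differentiable one_ne_zero).differentiableAt)
        (hd.intervalIntegrable a b)
    rw [← heq]
    exact intervalIntegral.norm_integral_le_integral_norm hab
  have hkey : ∀ s t : ℝ, t ≤ s →
      ‖β (τ s) - β (τ t)‖ ≤ (ℓ + 2 * π) / (2 * π) * (s - t) := by
    intro s t hts
    have hτts : τ t ≤ τ s := hτmono hts
    calc ‖β (τ s) - β (τ t)‖ ≤ ∫ u in τ t..τ s, ‖deriv β u‖ := hftc _ _ hτts
      _ ≤ ∫ u in τ t..τ s, g u := by
          apply intervalIntegral.integral_mono_on hτts (hd.norm.intervalIntegrable _ _)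
            (hgint _ _)
          intro x _
          simp [hgdef]
      _ = (σ (τ s) - σ (τ t)) / c := by rw [hσadd]; field_simp
      _ = (s - t) / c := by rw [hστ, hστ]
      _ = (ℓ + 2 * π) / (2 * π) * (s - t) := by
          rw [hcdef]; field_simp
  refine ⟨fun s => β (τ s), (hβc.comp hτc : _), ?_, fun t => hβN _, ?_, ?_⟩
  · intro t
    simp only [hτ2π t, hβp (τ t)]
  · intro s t
    rcases le_total t s with h | h
    · rw [abs_of_nonneg (by linarith)]
      exact hkey s t h
    · rw [abs_of_nonpos (by linarith), norm_sub_rev]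
      have := hkey t s h
      linarith [this]
  · refine ⟨fun p => β ((1 - p.1) * p.2 + p.1 * τ p.2), ?_, ?_, ?_, ?_, ?_⟩
    · exact hβc.comp (by fun_prop)
    · intro t; norm_num
    · intro t; norm_num
    · exact fun p => hβN _
    · intro s t
      have : (1 - s) * (t + 2 * π) + s * τ (t + 2 * π)
          = ((1 - s) * t + s * τ t) + 2 * π := by
        rw [hτ2π t]; ring
      simp only [this]
      exact hβp _

/-- Infinitely many uniformly Lipschitz periodic loops in a compact set contain
two that are uniformly close. -/
theorem exists_close_pair (hN : IsCompact N) {K δ : ℝ} (hK : 0 ≤ K) (hδ : 0 < δ)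
    (f : ℕ → ℝ → EuclideanSpace ℝ (Fin ν)) (hfN : ∀ n t, f n t ∈ N)
    (hfp : ∀ n, Function.Periodic (f n) (2 * π))
    (hlip : ∀ n s t, ‖f n s - f n t‖ ≤ K * |s - t|) :
    ∃ m n, m ≠ n ∧ ∀ t, ‖f m t - f n t‖ < δ := by
  have h2π : (0:ℝ) < 2 * π := by positivity
  obtain ⟨M, hM⟩ := exists_nat_gt (2 * π * K / (δ / 4))
  have hMpos : 0 < (M:ℝ) := lt_of_le_of_lt (by positivity) hM
  set h : ℝ := 2 * π / M with hhdef
  have hh : 0 < h := by positivity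
  have hKh : K * h < δ / 4 := by
    rw [hhdef, ← mul_div_assoc, div_lt_iff₀ hMpos]
    rw [div_lt_iff₀ (by positivity : (0:ℝ) < δ / 4)] at hM
    nlinarith
  -- a finite δ/4-net of N
  obtain ⟨T, hTfin, hTcover⟩ := (Metric.totallyBounded_iff).1 hN.totallyBounded (δ/4)
    (by positivity)
  have hnet : ∀ (n : ℕ) (i : Fin M), ∃ y ∈ T, f n (i * h) ∈ Metric.ball y (δ/4) := by
    intro n i
    have := hTcover (hfN n (i * h))
    simpa using this
  haveI : Finite T := hTfin.to_subtype
  set code : ℕ → (Fin M → T) := fun n i => ⟨(hnet n i).choose, (hnet n i).choose_spec.1⟩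
    with hcodedef
  obtain ⟨m, n, hmn, hcode⟩ := Finite.exists_ne_map_eq_of_infinite code
  refine ⟨m, n, hmn, ?_⟩
  -- first, closeness at the grid points
  have hgrid : ∀ i : Fin M, ‖f m (i * h) - f n (i * h)‖ < δ / 2 := by
    intro i
    have h1 : f m (i * h) ∈ Metric.ball ((code m i : EuclideanSpace ℝ (Fin ν))) (δ/4) :=
      (hnet m i).choose_spec.2
    have h2 : f n (i * h) ∈ Metric.ball ((code n i : EuclideanSpace ℝ (Fin ν))) (δ/4) :=
      (hnet n i).choose_spec.2
    rw [hcode] at h1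
    rw [Metric.mem_ball, dist_eq_norm] at h1 h2
    calc ‖f m (i * h) - f n (i * h)‖
        ≤ ‖f m (i * h) - (code n i : EuclideanSpace ℝ (Fin ν))‖
          + ‖f n (i * h) - (code n i : EuclideanSpace ℝ (Fin ν))‖ := by
          have := norm_sub_le (f m (i * h) - (code n i : EuclideanSpace ℝ (Fin ν)))
            (f n (i * h) - (code n i : EuclideanSpace ℝ (Fin ν)))
          simpa [sub_sub_sub_cancel_right] using this
      _ < δ/4 + δ/4 := add_lt_add h1 h2
      _ = δ/2 := by ring
  -- then, closeness everywhere, via periodicity and the Lipschitz bound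
  have hIco : ∀ t ∈ Set.Ico (0:ℝ) (2*π), ‖f m t - f n t‖ < δ := by
    intro t ht
    obtain ⟨ht0, ht2⟩ := ht
    set i : ℕ := ⌊t / h⌋.toNat with hidef
    have hfl0 : (0:ℤ) ≤ ⌊t / h⌋ := Int.floor_nonneg.2 (by positivity)
    have hir : (i : ℝ) = ((⌊t / h⌋ : ℤ) : ℝ) := by
      rw [hidef]
      exact_mod_cast Int.toNat_of_nonneg hfl0
    have hile : (i:ℝ) ≤ t / h := by rw [hir]; exact Int.floor_le _
    have hlt : t / h < (i:ℝ) + 1 := by rw [hir]; exact Int.lt_floor_add_one _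
    have hiM : i < M := by
      have hMh : (M:ℝ) * h = 2 * π := by rw [hhdef]; field_simp
      have h1 : t / h < M := by rw [div_lt_iff₀ hh]; nlinarith
      have : (i:ℝ) < M := lt_of_le_of_lt hile h1
      exact_mod_cast this
    set iF : Fin M := ⟨i, hiM⟩ with hiFdef
    have hclose_t : |t - i * h| ≤ h := by
      have h1 : (i:ℝ) * h ≤ t := by rw [← le_div_iff₀ hh]; exact hile
      have h2 : t < ((i:ℝ) + 1) * h := by rw [← div_lt_iff₀ hh]; exact hlt
      rw [abs_le]
      constructor <;> nlinarith
    have hgridi := hgrid iF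
    have hiFi : ((iF : ℕ) : ℝ) = (i : ℝ) := rfl
    have l1 : ‖f m t - f m (i * h)‖ ≤ K * h := by
      calc ‖f m t - f m (i * h)‖ ≤ K * |t - i * h| := hlip m t (i * h)
        _ ≤ K * h := mul_le_mul_of_nonneg_left hclose_t hK
    have l2 : ‖f n (i * h) - f n t‖ ≤ K * h := by
      calc ‖f n (i * h) - f n t‖ ≤ K * |(i:ℝ) * h - t| := hlip n (i * h) t
        _ ≤ K * h := by rw [abs_sub_comm]; exact mul_le_mul_of_nonneg_left hclose_t hK
    have tri : ‖f m t - f n t‖ ≤ ‖f m t - f m (i * h)‖ + ‖f m (i * h) - f n (i * h)‖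
        + ‖f n (i * h) - f n t‖ := by
      have := dist_triangle4 (f m t) (f m (i * h)) (f n (i * h)) (f n t)
      simpa [dist_eq_norm] using this
    have hgridi' : ‖f m ((i:ℝ) * h) - f n ((i:ℝ) * h)‖ < δ / 2 := by
      simpa [hiFi] using hgridi
    calc ‖f m t - f n t‖ ≤ ‖f m t - f m (i * h)‖ + ‖f m (i * h) - f n (i * h)‖
        + ‖f n (i * h) - f n t‖ := tri
      _ < K * h + δ/2 + K * h := by
          apply add_lt_add_of_lt_of_le _ l2
          exact add_lt_add_of_le_of_lt l1 hgridi'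
      _ < δ/4 + δ/2 + δ/4 := by linarith
      _ = δ := by ring
  intro t
  set k : ℤ := ⌊t / (2*π)⌋ with hkdef
  have hmem : t - k * (2*π) ∈ Set.Ico (0:ℝ) (2*π) :=
    ⟨Int.sub_floor_div_mul_nonneg t h2π, Int.sub_floor_div_mul_lt t h2π⟩
  have hm' : f m (t - k * (2*π)) = f m t := (hfp m).sub_int_mul_eq k
  have hn' : f n (t - k * (2*π)) = f n t := (hfp n).sub_int_mul_eq k
  have := hIco _ hmem
  rwa [hm', hn'] at this

theorem exists_seq_aux {α : Type*} {Q : α → Prop} {P : α → α → Prop} (h0 : ∃ x, Q x)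
    (hstep : ∀ x, Q x → ∃ y, Q y ∧ P y x) :
    ∃ f : ℕ → α, (∀ n, Q (f n)) ∧ ∀ n, P (f (n + 1)) (f n) := by
  obtain ⟨x0, hx0⟩ := h0
  choose g hg1 hg2 using hstep
  refine ⟨fun n => (Nat.rec (motive := fun _ => {x // Q x}) ⟨x0, hx0⟩
    (fun _ p => ⟨g p.1 p.2, hg1 p.1 p.2⟩) n : {x // Q x}).1,
    fun n => (Nat.rec (motive := fun _ => {x // Q x}) ⟨x0, hx0⟩
    (fun _ p => ⟨g p.1 p.2, hg1 p.1 p.2⟩) n : {x // Q x}).2, fun n => ?_⟩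
  exact hg2 _ _

end MinLenAux

/-- For a smooth compact (sub)manifold `N` (encoded as a compact subset of
`ℝ^ν` which is a smooth neighbourhood retract), the set of minimal lengths
`{‖γ‖ : γ a loop in N}` is a discrete subset of `[0, ∞)`. -/
theorem minLength_discrete
    {ν : ℕ} (N : Set (EuclideanSpace ℝ (Fin ν)))
    (hN : IsCompact N) (hNne : N.Nonempty)
    -- `N` is a smooth neighbourhood retract (true for smooth compact
    -- submanifolds, via the nearest point retraction):
    (U : Set (EuclideanSpace ℝ (Fin ν))) (hU : IsOpen U) (hNU : N ⊆ U)
    (r : EuclideanSpace ℝ (Fin ν) → EuclideanSpace ℝ (Fin ν))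
    (hr : ContDiffOn ℝ (⊤ : ℕ∞) r U) (hrN : ∀ x ∈ U, r x ∈ N)
    (hrid : ∀ x ∈ N, r x = x) :
    ∀ L ∈ {L | ∃ γ, IsLoopIn N γ ∧ L = minLength N γ},
      ∃ ε > 0, ∀ L' ∈ {L | ∃ γ, IsLoopIn N γ ∧ L = minLength N γ},
        |L' - L| < ε → L' = L := by
  intro L hL
  by_contra hcon
  push_neg at hcon
  obtain ⟨δ, hδpos, hth⟩ := hN.exists_thickening_subset_open hU hNU
  have hL0 : 0 ≤ L := by
    obtain ⟨γ, hγ, rfl⟩ := hL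
    exact MinLenAux.minLength_nonneg γ
  set ε₀ : ℝ := if L = 0 then 1 else L with hε₀def
  have hε₀ : 0 < ε₀ := by
    rw [hε₀def]; split
    · norm_num
    · rename_i hne; exact lt_of_le_of_ne hL0 (Ne.symm hne)
  set Q : ℝ → Prop := fun x => (∃ γ, IsLoopIn N γ ∧ x = minLength N γ) ∧ x ≠ L ∧ |x - L| < ε₀
    with hQdef
  have hstep : ∀ x, Q x → ∃ y, Q y ∧ |y - L| < |x - L| := by
    intro x hx
    obtain ⟨_, hxne, hxlt⟩ := hx
    have hposx : 0 < |x - L| := abs_pos.2 (sub_ne_zero.2 hxne)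
    obtain ⟨y, hyS, hylt, hyne⟩ := hcon |x - L| hposx
    exact ⟨y, ⟨hyS, hyne, lt_trans hylt hxlt⟩, hylt⟩
  have h0 : ∃ x, Q x := by
    obtain ⟨y, hyS, hylt, hyne⟩ := hcon ε₀ hε₀
    exact ⟨y, hyS, hyne, hylt⟩
  obtain ⟨Ls, hQs, hdec⟩ := MinLenAux.exists_seq_aux h0 hstep
  have hanti : StrictAnti (fun n => |Ls n - L|) := strictAnti_nat_of_succ_lt hdec
  have hdist : ∀ m n : ℕ, m ≠ n → Ls m ≠ Ls n := by
    intro m n hmn heq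
    rcases lt_or_gt_of_ne hmn with hlt | hlt
    · have := hanti hlt
      simp only [heq] at this
      exact lt_irrefl _ this
    · have := hanti hlt
      simp only [heq] at this
      exact lt_irrefl _ this
  have hγ : ∀ n, ∃ γ, IsLoopIn N γ ∧ Ls n = minLength N γ := fun n => (hQs n).1
  choose γs hγloop hγval using hγ
  have hpos : ∀ n, 0 < Ls n := by
    intro n
    obtain ⟨_, hne, hlt⟩ := hQs n
    have h1 : 0 ≤ Ls n := (hγval n) ▸ MinLenAux.minLength_nonneg (γs n)
    by_cases hL0' : L = 0
    · exact lt_of_le_of_ne h1 (Ne.symm (by rwa [hL0'] at hne))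
    · have hεL : ε₀ = L := by rw [hε₀def, if_neg hL0']
      rw [hεL, abs_lt] at hlt
      linarith [hlt.1]
  set B : ℝ := L + ε₀ + 1 with hBdef
  have hLsB : ∀ n, Ls n < L + ε₀ := by
    intro n
    obtain ⟨_, _, hlt⟩ := hQs n
    rw [abs_lt] at hlt
    linarith [hlt.2]
  have hπ : (0:ℝ) < 2 * π := by positivity
  have hB0 : 0 < B := by rw [hBdef]; linarith
  set K : ℝ := (B + 2 * π) / (2 * π) with hKdef
  have hK0 : 0 ≤ K := by rw [hKdef]; positivity
  have hclassne : ∀ n, {x : ℝ | ∃ β, ContDiff ℝ 1 β ∧ IsLoopIn N β ∧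
      LoopHomotopicIn N (γs n) β ∧ x = loopLength β}.Nonempty := by
    intro n
    by_contra hemp
    rw [Set.not_nonempty_iff_eq_empty] at hemp
    have hzero : minLength N (γs n) = 0 := by
      unfold minLength
      rw [hemp]
      exact Real.sInf_empty
    have := hpos n
    rw [hγval n, hzero] at this
    exact lt_irrefl _ this
  have hβex : ∀ n, ∃ β, ContDiff ℝ 1 β ∧ IsLoopIn N β ∧ LoopHomotopicIn N (γs n) β ∧
      loopLength β < B := by
    intro n
    obtain ⟨x, hxmem, hxlt⟩ := Real.lt_sInf_add_pos (hclassne n) zero_lt_one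
    obtain ⟨β, h1, h2, h3, rfl⟩ := hxmem
    refine ⟨β, h1, h2, h3, ?_⟩
    have hsinf : sInf {x : ℝ | ∃ β, ContDiff ℝ 1 β ∧ IsLoopIn N β ∧
        LoopHomotopicIn N (γs n) β ∧ x = loopLength β} = minLength N (γs n) := rfl
    rw [hsinf, ← hγval n] at hxlt
    have := hLsB n
    rw [hBdef]
    linarith
  have hfex : ∀ n, ∃ f, Continuous f ∧ Function.Periodic f (2 * π) ∧ (∀ t, f t ∈ N) ∧
      (∀ s t : ℝ, ‖f s - f t‖ ≤ K * |s - t|) ∧ LoopHomotopicIn N (γs n) f := by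
    intro n
    obtain ⟨β, h1, h2, h3, h4⟩ := hβex n
    obtain ⟨f, hf1, hf2, hf3, hf4, hf5⟩ := MinLenAux.exists_lipschitz_rep β h1 h2
    refine ⟨f, hf1, hf2, hf3, ?_, MinLenAux.hom_trans h3 hf5⟩
    intro s t
    refine le_trans (hf4 s t) ?_
    apply mul_le_mul_of_nonneg_right _ (abs_nonneg _)
    rw [hKdef, div_le_div_iff₀ hπ hπ]
    have := MinLenAux.loopLength_nonneg β
    nlinarith
  choose fs hf1 hf2 hf3 hf4 hf5 using hfex
  obtain ⟨m, n, hmn, hclose⟩ :=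
    MinLenAux.exists_close_pair hN hK0 hδpos fs (fun n t => hf3 n t) hf2 hf4
  have hhom : LoopHomotopicIn N (fs m) (fs n) :=
    MinLenAux.hom_of_close hr hrN hrid hth (hf1 m) (hf1 n) (hf3 m) (hf3 n) (hf2 m) (hf2 n)
      hclose
  have hhom2 : LoopHomotopicIn N (γs m) (γs n) :=
    MinLenAux.hom_trans (hf5 m) (MinLenAux.hom_trans hhom (MinLenAux.hom_symm (hf5 n)))
  have heq : Ls m = Ls n := by
    rw [hγval m, hγval n]
    exact MinLenAux.minLength_congr hhom2
  exact hdist m n hmn heq
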